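/- Let n > m ≥ 1 be integers, W ⊆ ℝⁿ a nonempty open set, and f : W → ℝᵐ a continuous map. If f achieves perfect precision on W, then f is essentially one-to-one on W; indeed, f is injective on W. -/
import Mathlib


open MeasureTheory Metric Set
open scoped ENNReal NNReal

noncomputable section

/-- The precision of a map `f` with domain `Ω ⊆ ℝⁿ` at the pair of sets `(U, V)`:
`vol(f⁻¹(V) ∩ U) / vol(f⁻¹(V))`, where the preimage is taken within the domain `Ω`. -/
def precisionIR {n m : ℕ} (f : EuclideanSpace ℝ (Fin n) → EuclideanSpace ℝ (Fin m))
    (Ω : Set (EuclideanSpace ℝ (Fin n))) (U : Set (EuclideanSpace ℝ (Fin n)))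
    (V : Set (EuclideanSpace ℝ (Fin m))) : ℝ≥0∞ :=
  volume ((Ω ∩ f ⁻¹' V) ∩ U) / volume (Ω ∩ f ⁻¹' V)

/-- `f` (with domain `Ω`) achieves perfect precision at `x`: for every `r_U > 0` there is
`r_V > 0` such that the precision at `(B(x, r_U), B(f x, r_V))` equals `1`. -/
def PerfectPrecisionAt {n m : ℕ} (f : EuclideanSpace ℝ (Fin n) → EuclideanSpace ℝ (Fin m))
    (Ω : Set (EuclideanSpace ℝ (Fin n))) (x : EuclideanSpace ℝ (Fin n)) : Prop :=
  ∀ rU > (0 : ℝ), ∃ rV > (0 : ℝ), precisionIR f Ω (ball x rU) (ball (f x) rV) = 1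

/-- **Perfect precision implies essential injectivity.** Let `n > m ≥ 1`, `W ⊆ ℝⁿ` a
nonempty open set, and `f : W → ℝᵐ` continuous. If `f` achieves perfect precision on `W`,
then `f` is essentially one-to-one on `W` (every fiber has zero `(n−m)`-dimensional
Hausdorff measure); indeed `f` is injective on `W`. -/
theorem perfectPrecision_essentially_one_to_one (n m : ℕ) (hm : 1 ≤ m) (hnm : m < n)
    (W : Set (EuclideanSpace ℝ (Fin n))) (hW : IsOpen W) (hWne : W.Nonempty)
    (f : EuclideanSpace ℝ (Fin n) → EuclideanSpace ℝ (Fin m)) (hf : ContinuousOn f W)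
    (hprec : ∀ x ∈ W, PerfectPrecisionAt f W x) :
    (∀ x ∈ W, μH[((n : ℝ) - m)] {w ∈ W | f w = f x} = 0) ∧ Set.InjOn f W := by
  have hinj : Set.InjOn f W := by
    intro y hy x hx hfeq
    by_contra hne
    -- use perfect precision at x with radius d/2, where d = dist x y
    have hd : 0 < dist x y := dist_pos.2 fun h => hne h.symm
    obtain ⟨rV, hrV, hone⟩ := hprec x hx (dist x y / 2) (by linarith)
    rw [precisionIR] at hone
    set A : Set (EuclideanSpace ℝ (Fin n)) := W ∩ f ⁻¹' (ball (f x) rV) with hA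
    set U : Set (EuclideanSpace ℝ (Fin n)) := ball x (dist x y / 2) with hU
    have hAU_fin : volume (A ∩ U) < ∞ :=
      lt_of_le_of_lt (measure_mono inter_subset_right) measure_ball_lt_top
    have hA0 : volume A ≠ 0 := by
      intro h0
      have hAU0 : volume (A ∩ U) = 0 := measure_mono_null inter_subset_left h0
      rw [h0, hAU0] at hone
      simp at hone
    have hAtop : volume A ≠ ∞ := by
      intro htop
      rw [htop, ENNReal.div_top] at hone
      exact zero_ne_one hone
    have hAeq : volume (A ∩ U) = volume A := by
      rwa [ENNReal.div_eq_one_iff hA0 hAtop] at hone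
    -- hence the part of A outside U is null
    have hdiff : volume (A \ U) = 0 := by
      have h : volume (A ∩ U) + volume (A \ U) = volume A :=
        measure_inter_add_diff (μ := volume) A measurableSet_ball
      rw [hAeq] at h
      nth_rewrite 2 [← add_zero (volume A)] at h
      exact (ENNReal.add_right_inj hAtop).mp h
    -- find a small ball around y contained in A \ U
    have hyV : f y ∈ ball (f x) rV := by rw [hfeq]; simpa using hrV
    have hcont := (hf y hy).tendsto
    have hmem : f ⁻¹' (ball (f x) rV) ∈ nhdsWithin y W :=
      hcont (isOpen_ball.mem_nhds hyV)
    rw [hW.nhdsWithin_eq hy] at hmem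
    obtain ⟨ε₁, hε₁, hball₁⟩ := Metric.mem_nhds_iff.1 hmem
    obtain ⟨ε₂, hε₂, hball₂⟩ := Metric.mem_nhds_iff.1 (hW.mem_nhds hy)
    set ε := min (min ε₁ ε₂) (dist x y / 2) with hε
    have hεpos : 0 < ε := lt_min (lt_min hε₁ hε₂) (by linarith)
    have hsub : ball y ε ⊆ A \ U := by
      intro z hz
      have hz1 : z ∈ ball y ε₁ := ball_subset_ball (le_trans (min_le_left _ _)
        (min_le_left _ _)) hz
      have hz2 : z ∈ ball y ε₂ := ball_subset_ball (le_trans (min_le_left _ _)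
        (min_le_right _ _)) hz
      have hz3 : dist z y < dist x y / 2 :=
        lt_of_lt_of_le (mem_ball.1 hz) (min_le_right _ _)
      refine ⟨⟨hball₂ hz2, hball₁ hz1⟩, ?_⟩
      intro hzU
      have : dist x y ≤ dist x z + dist z y := dist_triangle x z y
      have hxz : dist x z < dist x y / 2 := by
        rw [dist_comm]; exact mem_ball.1 hzU
      linarith
    have : volume (ball y ε) = 0 := measure_mono_null hsub hdiff
    exact (Metric.measure_ball_pos volume y hεpos).ne' this
  refine ⟨fun x hx => ?_, hinj⟩
  have hset : {w ∈ W | f w = f x} = {x} := by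
    ext w
    constructor
    · rintro ⟨hwW, hwf⟩; exact hinj hwW hx hwf
    · rintro rfl; exact ⟨hx, rfl⟩
  rw [hset]
  haveI := MeasureTheory.Measure.noAtoms_hausdorff (EuclideanSpace ℝ (Fin n))
    (show (0 : ℝ) < (n : ℝ) - m by
      have : (m : ℝ) < n := by exact_mod_cast hnm
      linarith)
  exact measure_singleton x

end
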